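/- arXiv:math/0410550 — 3 statements merged into one kernel-verified Lean document; each statement's English description precedes it below -/
import Mathlib

section
/- For all 0 ≤ k ≤ n, the Fibonomial coefficient C_F(n,k) = F_n! / (F_k! · F_{n−k}!) is a positive integer, where F_m! = F_m · F_{m−1} · ... · F_1 and F_0! = 1. -/
/-!
The addition formula `F (a + b + 2) = F a * F (b + 1) + F (a + 1) * F (b + 2)` is a
Pascal-type recurrence for F-factorials: it writes `(a + b + 2)_F!` as a sum of two terms, and
`(a + 1)_F! * (b + 1)_F!` divides the first because `(a + 1)_F! * b_F! ∣ (a + b + 1)_F!` and the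
second because `a_F! * (b + 1)_F! ∣ (a + b + 1)_F!`. Induction on `a + b` then shows
`a_F! * b_F! ∣ (a + b)_F!`.
-/

/-- The F-factorial `n_F! = F_n · F_{n-1} ⋯ F_1`, with `0_F! = 1`. -/
def ffact (n : ℕ) : ℕ := ∏ i ∈ Finset.Icc 1 n, Nat.fib i

open Nat

lemma ffact_zero : ffact 0 = 1 := rfl

lemma ffact_succ (n : ℕ) : ffact (n + 1) = fib (n + 1) * ffact n := by
  rw [ffact, ffact, Finset.prod_Icc_succ_top (by omega), mul_comm]

lemma ffact_pos (n : ℕ) : 0 < ffact n :=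
  Finset.prod_pos fun _ hi => fib_pos.2 (Finset.mem_Icc.1 hi).1

lemma ffact_succ_add_succ (a b : ℕ) :
    ffact (a + 1 + (b + 1)) =
      (fib a * fib (b + 1) + fib (a + 1) * fib (b + 2)) * ffact (a + b + 1) := by
  rw [show a + 1 + (b + 1) = a + (b + 1) + 1 by ring, ffact_succ, fib_add]
  ring_nf

theorem ffact_mul_ffact_dvd : ∀ a b : ℕ, ffact a * ffact b ∣ ffact (a + b)
  | 0, b => by simp [ffact_zero]
  | a + 1, 0 => by simp [ffact_zero]
  | a + 1, b + 1 => by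
    have ih_left : ffact (a + 1) * ffact b ∣ ffact (a + b + 1) := by
      simpa [add_right_comm] using ffact_mul_ffact_dvd (a + 1) b
    have ih_right : ffact a * ffact (b + 1) ∣ ffact (a + b + 1) := by
      simpa [add_assoc] using ffact_mul_ffact_dvd a (b + 1)
    rw [ffact_succ_add_succ, add_mul]
    refine dvd_add ?_ ?_
    · calc ffact (a + 1) * ffact (b + 1) = fib (b + 1) * (ffact (a + 1) * ffact b) := by
            rw [ffact_succ b]; ring
        _ ∣ fib (b + 1) * ffact (a + b + 1) := mul_dvd_mul_left _ ih_left
        _ ∣ fib a * fib (b + 1) * ffact (a + b + 1) := Dvd.intro_left (fib a) (by ring)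
    · calc ffact (a + 1) * ffact (b + 1) = fib (a + 1) * (ffact a * ffact (b + 1)) := by
            rw [ffact_succ a]; ring
        _ ∣ fib (a + 1) * ffact (a + b + 1) := mul_dvd_mul_left _ ih_right
        _ ∣ fib (a + 1) * fib (b + 2) * ffact (a + b + 1) :=
          Dvd.intro_left (fib (b + 2)) (by ring)

theorem fibonomial_int (n k : ℕ) (hk : k ≤ n) :
    ∃ m : ℕ, 0 < m ∧ ffact n = m * (ffact k * ffact (n - k)) := by
  obtain ⟨m, hm⟩ := ffact_mul_ffact_dvd k (n - k)
  rw [Nat.add_sub_cancel' hk] at hm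
  exact ⟨m, Nat.pos_of_mul_pos_left (hm ▸ ffact_pos n), by rw [hm, mul_comm]⟩
end

section
/- In the Fibonacci cobweb poset, if x belongs to level k and y belongs to level n with n > k+1, then the Möbius function satisfies μ(x,y) = −∏_{l=k+1}^{n−1} (1 − F_l), where F_l is the l-th Fibonacci number. -/
/-!
Strong induction on the level of `y`. The elements strictly between `x` and `y` are `x` itself
and the whole levels `l` with `k < l < n`, level `l` having `F_l` elements on each of which,
by induction, `μ x` takes the value `-∏_{k < j < l} (1 - F_j)`. The recursion therefore reads
`μ(x, y) = -(1 - ∑_{k < l < n} F_l ∏_{k < j < l} (1 - F_j))`, and the bracket telescopes to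
`∏_{k < l < n} (1 - F_l)`.
-/

open Finset

lemma prod_Ico_one_sub {R : Type*} [CommRing R] (f : ℕ → R) (a b : ℕ) :
    ∏ l ∈ Ico a b, (1 - f l) = 1 - ∑ m ∈ Ico a b, f m * ∏ l ∈ Ico a m, (1 - f l) := by
  rw [prod_one_sub_ordered]
  refine congrArg _ (sum_congr rfl fun m hm => ?_)
  rw [Ico_filter_lt, min_eq_right (mem_Ico.mp hm).2.le]

namespace Cobweb

def level (m : ℕ) : Finset ℕ := Ico (Nat.fib (m + 1)) (Nat.fib (m + 2))

lemma card_level (m : ℕ) : #(level m) = Nat.fib m := by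
  rw [level, Nat.card_Ico, Nat.fib_add_two]
  omega

lemma pos_of_mem_level {z m : ℕ} (hz : z ∈ level m) : 0 < z :=
  (Nat.fib_pos.mpr m.succ_pos).trans_le (mem_Ico.mp hz).1

lemma lt_of_mem_level_of_lt {a b i j : ℕ} (ha : a ∈ level i) (hb : b ∈ level j)
    (hij : i < j) : a < b :=
  calc a < Nat.fib (i + 2) := (mem_Ico.mp ha).2
    _ ≤ Nat.fib (j + 1) := Nat.fib_mono (by omega)
    _ ≤ b := (mem_Ico.mp hb).1

lemma eq_of_mem_level_of_mem_level {z i j : ℕ} (hi : z ∈ level i) (hj : z ∈ level j) :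
    i = j := by
  rcases lt_trichotomy i j with h | h | h
  · exact absurd (lt_of_mem_level_of_lt hi hj h) (lt_irrefl z)
  · exact h
  · exact absurd (lt_of_mem_level_of_lt hj hi h) (lt_irrefl z)

lemma pairwiseDisjoint_level (s : Set ℕ) : s.PairwiseDisjoint level :=
  fun _ _ _ _ hij => disjoint_left.mpr fun _ hi hj => hij (eq_of_mem_level_of_mem_level hi hj)

section Poset

variable {lvl : ℕ → ℕ} (hlvl : ∀ z, 1 ≤ z → z ∈ level (lvl z))
include hlvl

lemma lvl_eq_of_mem_level {z m : ℕ} (hz : z ∈ level m) : lvl z = m :=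
  eq_of_mem_level_of_mem_level (hlvl z (pos_of_mem_level hz)) hz

lemma lt_of_lvl_lt {a b : ℕ} (ha : 1 ≤ a) (hb : 1 ≤ b) (h : lvl a < lvl b) : a < b :=
  lt_of_mem_level_of_lt (hlvl a ha) (hlvl b hb) h

lemma filter_Ico_eq_insert_biUnion_level {x y : ℕ} (hx : 1 ≤ x) (hy : 1 ≤ y)
    (hxy : lvl x < lvl y) :
    (Ico 1 y).filter (fun z => (x = z ∨ lvl x < lvl z) ∧ (z = y ∨ lvl z < lvl y) ∧ z ≠ y)
      = insert x ((Ico (lvl x + 1) (lvl y)).biUnion level) := by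
  ext z
  simp only [mem_filter, mem_Ico, mem_insert, mem_biUnion]
  constructor
  · rintro ⟨⟨hz, -⟩, rfl | hxz, rfl | hzy, hne⟩
    · exact Or.inl rfl
    · exact Or.inl rfl
    · exact absurd rfl hne
    · exact Or.inr ⟨lvl z, ⟨hxz, hzy⟩, hlvl z hz⟩
  · rintro (rfl | ⟨m, ⟨hxm, hmy⟩, hzm⟩)
    · exact ⟨⟨hx, lt_of_lvl_lt hlvl hx hy hxy⟩, Or.inl rfl, Or.inr hxy,
        (lt_of_lvl_lt hlvl hx hy hxy).ne⟩
    · have hz : 1 ≤ z := pos_of_mem_level hzm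
      rw [← lvl_eq_of_mem_level hlvl hzm] at hxm hmy
      exact ⟨⟨hz, lt_of_lvl_lt hlvl hz hy hmy⟩, Or.inr hxm, Or.inr hmy,
        (lt_of_lvl_lt hlvl hz hy hmy).ne⟩

lemma mu_eq_neg_prod_Ico {μ : ℕ → ℕ → ℤ} (hdiag : ∀ x, μ x x = 1)
    (hrec : ∀ x y, 1 ≤ x → 1 ≤ y → (x = y ∨ lvl x < lvl y) → x ≠ y →
      μ x y = -∑ z ∈ (Ico 1 y).filter
        (fun z => (x = z ∨ lvl x < lvl z) ∧ (z = y ∨ lvl z < lvl y) ∧ z ≠ y), μ x z)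
    {x : ℕ} (hx : 1 ≤ x) (n : ℕ) :
    ∀ y, 1 ≤ y → lvl y = n → lvl x < n →
      μ x y = -∏ l ∈ Ico (lvl x + 1) n, (1 - (Nat.fib l : ℤ)) := by
  induction n using Nat.strong_induction_on with
  | _ n ih =>
  intro y hy hyn hxn
  have hxy : lvl x < lvl y := hyn ▸ hxn
  have hsum_level : ∀ m ∈ Ico (lvl x + 1) n, ∑ z ∈ level m, μ x z
      = -(Nat.fib m * ∏ l ∈ Ico (lvl x + 1) m, (1 - (Nat.fib l : ℤ))) := by
    intro m hm
    rw [mem_Ico] at hm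
    rw [sum_congr rfl fun z hz => ih m hm.2 z (pos_of_mem_level hz)
      (lvl_eq_of_mem_level hlvl hz) (by omega), sum_const, card_level, nsmul_eq_mul]
    ring
  have hx_notMem : x ∉ (Ico (lvl x + 1) n).biUnion level := by
    simp only [mem_biUnion, mem_Ico, not_exists, not_and]
    intro m hm hxm
    exact absurd (lvl_eq_of_mem_level hlvl hxm) (by omega)
  rw [hrec x y hx hy (Or.inr hxy) (lt_of_lvl_lt hlvl hx hy hxy).ne,
    filter_Ico_eq_insert_biUnion_level hlvl hx hy hxy, hyn, sum_insert hx_notMem, hdiag,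
    sum_biUnion (pairwiseDisjoint_level _), sum_congr rfl hsum_level, prod_Ico_one_sub,
    sum_neg_distrib, sub_eq_add_neg]

end Poset

end Cobweb

theorem cobweb_mu_general_general
    (lvl : ℕ → ℕ)
    (hlvl : ∀ x : ℕ, 1 ≤ x →
      Nat.fib (lvl x + 1) ≤ x ∧ x ≤ Nat.fib (lvl x + 2) - 1)
    (μ : ℕ → ℕ → ℤ)
    (hdiag : ∀ x, μ x x = 1)
    (hrec : ∀ x y, 1 ≤ x → 1 ≤ y → (x = y ∨ lvl x < lvl y) → x ≠ y →
      μ x y = -∑ z ∈ (Finset.Ico 1 y).filter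
        (fun z => (x = z ∨ lvl x < lvl z) ∧ (z = y ∨ lvl z < lvl y) ∧ z ≠ y), μ x z)
    (x y k n : ℕ) (hx : 1 ≤ x) (hy : 1 ≤ y)
    (hxk : lvl x = k) (hyn : lvl y = n) (hkn : k + 1 < n) :
    μ x y = -∏ l ∈ Finset.Icc (k + 1) (n - 1), (1 - (Nat.fib l : ℤ)) := by
  have hmem : ∀ z, 1 ≤ z → z ∈ Cobweb.level (lvl z) := fun z hz => by
    obtain ⟨hlow, hhigh⟩ := hlvl z hz
    have hfib : 0 < Nat.fib (lvl z + 2) := Nat.fib_pos.mpr (by omega)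
    exact mem_Ico.mpr ⟨hlow, by omega⟩
  have hIco : Finset.Ico (k + 1) n = Finset.Icc (k + 1) (n - 1) := by
    rw [← Finset.Ico_add_one_right_eq_Icc, Nat.sub_add_cancel (by omega)]
  rw [← hIco, ← hxk]
  exact Cobweb.mu_eq_neg_prod_Ico hmem hdiag hrec hx n y hy hyn (by omega)

/-- In the Fibonacci cobweb poset (positive integers, level `l` being the interval
`[F_{l+1}, F_{l+2}-1]` of cardinality `F_l`, with `x ≤ y` iff `x = y` or
`level x < level y`), the Möbius function on a pair `(x, y)` with `x` at level `k`
and `y` at level `n`, `n > k + 1`, equals `-∏_{l=k+1}^{n-1} (1 - F_l)`. -/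
theorem cobweb_mu_general
    (lvl : ℕ → ℕ)
    (hlvl : ∀ x : ℕ, 1 ≤ x →
      Nat.fib (lvl x + 1) ≤ x ∧ x ≤ Nat.fib (lvl x + 2) - 1)
    (μ : ℕ → ℕ → ℤ)
    (hdiag : ∀ x, μ x x = 1)
    (hrec : ∀ x y, 1 ≤ x → 1 ≤ y → (x = y ∨ lvl x < lvl y) → x ≠ y →
      μ x y = -∑ z ∈ (Finset.Ico 1 y).filter
        (fun z => (x = z ∨ lvl x < lvl z) ∧ (z = y ∨ lvl z < lvl y) ∧ z ≠ y), μ x z)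
    (x y k n : ℕ) (hx : 1 ≤ x) (hy : 1 ≤ y) (hk : 1 ≤ k)
    (hxk : lvl x = k) (hyn : lvl y = n) (hkn : k + 1 < n) :
    μ x y = -∏ l ∈ Finset.Icc (k + 1) (n - 1), (1 - (Nat.fib l : ℤ)) :=
  cobweb_mu_general_general lvl hlvl μ hdiag hrec x y k n hx hy hxk hyn hkn
end

section
/- The Hermite F-polynomial H_{n,F}(x) = ∑_{k≥0} ((−a)^k / (2^k F_k!)) · n_F^{\underline{2k}} · x^{n−2k} satisfies ∂_F H_{n,F}(x) = F_n · H_{n−1,F}(x) for all n ≥ 1, where ∂_F(x^m) = F_m x^{m−1}. -/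
open Polynomial

/-- The F-factorial as an element of `K`. -/
noncomputable def ffactK (K : Type*) [Field K] (k : ℕ) : K :=
  ∏ i ∈ Finset.Icc 1 k, (Nat.fib i : K)

/-- The F-falling factorial `n_F^{\underline{j}} = F_n F_{n-1} ⋯ F_{n-j+1}`
(zero when `j > n`), as an element of `K`. -/
noncomputable def ffallK (K : Type*) [Field K] (n j : ℕ) : K :=
  ∏ i ∈ Finset.range j, (Nat.fib (n - i) : K)

/-- The Hermite F-polynomial
`H_{n,F}(x) = ∑_{k ≥ 0} ((-a)^k / (2^k F_k!)) n_F^{\underline{2k}} x^{n-2k}`. -/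
noncomputable def hermiteF (K : Type*) [Field K] (a : K) (n : ℕ) : Polynomial K :=
  ∑ k ∈ Finset.range (n + 1),
    (((-a) ^ k / (2 ^ k * ffactK K k)) * ffallK K n (2 * k)) • X ^ (n - 2 * k)

/-! The proof is termwise: `∂_F` sends `x^{n-2k}` to `F_{n-2k} x^{n-2k-1}`, and the F-falling
factorial absorbs the new factor, `(n)_F^{\underline{2k}} F_{n-2k} = F_n (n-1)_F^{\underline{2k}}`,
since both sides are the product `F_n F_{n-1} ⋯ F_{n-2k}`. The top term `k = n` of `H_{n,F}`
vanishes, so the remaining sum is exactly `F_n H_{n-1,F}`. -/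

section

variable {K : Type*} [Field K]

lemma ffallK_eq_zero {n j : ℕ} (h : n < j) : ffallK K n j = 0 :=
  Finset.prod_eq_zero (Finset.mem_range.mpr h) (by simp)

lemma ffallK_succ_mul_fib_sub (n j : ℕ) :
    ffallK K (n + 1) j * (Nat.fib (n + 1 - j) : K) = (Nat.fib (n + 1) : K) * ffallK K n j :=
  calc ffallK K (n + 1) j * (Nat.fib (n + 1 - j) : K)
      = ffallK K (n + 1) (j + 1) := (Finset.prod_range_succ _ j).symm
    _ = ffallK K n j * (Nat.fib (n + 1) : K) := by simp [ffallK, Finset.prod_range_succ']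
    _ = (Nat.fib (n + 1) : K) * ffallK K n j := mul_comm _ _

lemma map_ffallK_smul_X_pow {D : K[X] →ₗ[K] K[X]}
    (hD : ∀ m : ℕ, D (X ^ m) = (Nat.fib m : K) • X ^ (m - 1)) (c : K) (m j : ℕ) :
    D ((c * ffallK K (m + 1) j) • X ^ (m + 1 - j))
      = (Nat.fib (m + 1) : K) • ((c * ffallK K m j) • X ^ (m - j)) := by
  rw [map_smul, hD, smul_smul, smul_smul, show m + 1 - j - 1 = m - j by omega, mul_assoc,
    ffallK_succ_mul_fib_sub, mul_left_comm]

end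

theorem hermiteF_fderiv_general {K : Type*} [Field K] (a : K)
    (D : K[X] →ₗ[K] K[X])
    (hD : ∀ m : ℕ, D (X ^ m) = (Nat.fib m : K) • X ^ (m - 1)) :
    ∀ n : ℕ, 1 ≤ n →
      D (hermiteF K a n) = (Nat.fib n : K) • hermiteF K a (n - 1) := by
  intro n hn
  obtain ⟨m, rfl⟩ := Nat.exists_eq_add_of_le' hn
  rw [hermiteF, Finset.sum_range_succ, ffallK_eq_zero (by omega : m + 1 < 2 * (m + 1)),
    mul_zero, zero_smul, add_zero, map_sum, Nat.add_sub_cancel, hermiteF, Finset.smul_sum]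
  exact Finset.sum_congr rfl fun k _ => map_ffallK_smul_X_pow hD _ m (2 * k)

theorem hermiteF_fderiv {K : Type*} [Field K] [CharZero K] (a : K)
    (D : K[X] →ₗ[K] K[X])
    (hD : ∀ m : ℕ, D (X ^ m) = (Nat.fib m : K) • X ^ (m - 1)) :
    ∀ n : ℕ, 1 ≤ n →
      D (hermiteF K a n) = (Nat.fib n : K) • hermiteF K a (n - 1) :=
  hermiteF_fderiv_general a D hD
end
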